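/- Let X = {p} ∪ ω^{<ω₁} where every element of the tree ω^{<ω₁} (countable sequences of natural numbers of countable length) is isolated, and basic neighbourhoods of p are the sets {p} ∪ (ω^{<ω₁} \ F) where F is a union of finitely many branches of the tree. Then Alice has a winning strategy in the long tightness game G_1^{ω₁}(Ω_p, Ω_p): she plays the immediate successors of the concatenation of Bob's previous choices, forcing all of Bob's choices to lie along a single branch. -/

import Mathlib

open Topology Set

/-- The tree `ω^{<ω₁}`: sequences of natural numbers of countable ordinal length. -/
def TSeq : Type 1 :=
  Σ ξ : {o : Ordinal.{0} // o < (Cardinal.aleph 1).ord}, ∀ α : Ordinal.{0}, α < ξ.1 → ℕ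

/-- The extension (tree) order on `TSeq`: `s ⊑ t` iff `t` extends `s`. -/
def TSeq.le (s t : TSeq) : Prop :=
  ∃ h : s.1.1 ≤ t.1.1, ∀ α hα, s.2 α hα = t.2 α (lt_of_lt_of_le hα h)

/-- A branch of the tree `ω^{<ω₁}`: a maximal chain with respect to the extension order. -/
def IsBranch (c : Set TSeq) : Prop :=
  IsChain TSeq.le c ∧ ∀ c', IsChain TSeq.le c' → c ⊆ c' → c = c'

/-- The space `X = {p} ∪ ω^{<ω₁}` (`p = none`): tree elements are isolated, and a set
containing `p` is open iff its complement is covered by finitely many branches. -/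
instance : TopologicalSpace (Option TSeq) where
  IsOpen U := none ∈ U → ∃ F : Set (Set TSeq), F.Finite ∧ (∀ b ∈ F, IsBranch b) ∧
    {t : TSeq | some t ∉ U} ⊆ ⋃₀ F
  isOpen_univ := by
    intro _
    exact ⟨∅, Set.finite_empty, by simp, by simp⟩
  isOpen_inter := by
    intro U V hU hV h
    obtain ⟨F₁, hF₁, hb₁, hs₁⟩ := hU h.1
    obtain ⟨F₂, hF₂, hb₂, hs₂⟩ := hV h.2
    refine ⟨F₁ ∪ F₂, hF₁.union hF₂, ?_, ?_⟩
    · rintro b (hb | hb)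
      exacts [hb₁ b hb, hb₂ b hb]
    · intro t ht
      simp only [Set.mem_setOf_eq, Set.mem_inter_iff, not_and_or] at ht
      rcases ht with ht | ht
      · exact Set.sUnion_mono Set.subset_union_left (hs₁ ht)
      · exact Set.sUnion_mono Set.subset_union_right (hs₂ ht)
  isOpen_sUnion := by
    intro S hS h
    obtain ⟨s, hs, hns⟩ := h
    obtain ⟨F, hF, hb, hsub⟩ := hS s hs hns
    refine ⟨F, hF, hb, fun t ht => hsub fun hts => ht ⟨s, hs, hts⟩⟩

universe u v

/-- A strategy for Alice in the tightness game `G_1^κ(Ω_p, Ω_p)`: at inning `ξ < κ`, given the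
history of Bob's previous choices, Alice plays a set having `p` in its closure. -/
structure AliceStratOne (X : Type u) [TopologicalSpace X] (p : X) (κ : Ordinal.{v}) where
  move : ∀ ξ : Ordinal.{v}, ξ < κ → (∀ α : Ordinal.{v}, α < ξ → X) → Set X
  mem : ∀ ξ hξ hist, p ∈ closure (move ξ hξ hist)

/-- The strategy is winning for Alice: for every play `g` of Bob consistent with it (Bob
always picks a point of Alice's set), the set of Bob's points does not have `p` in its
closure. -/
def AliceStratOne.Winning {X : Type u} [TopologicalSpace X] {p : X} {κ : Ordinal.{v}}
    (S : AliceStratOne X p κ) : Prop :=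
  ∀ g : ∀ ξ : Ordinal.{v}, ξ < κ → X,
    (∀ ξ hξ, g ξ hξ ∈ S.move ξ hξ (fun α hα => g α (hα.trans hξ))) →
    p ∉ closure {x | ∃ (ξ : Ordinal.{v}) (hξ : ξ < κ), g ξ hξ = x}

/-!
Alice answers Bob's choices `a_α` (of length `α + 1`) with the immediate successors of the node
whose `α`-th entry is the last entry of `a_α`, for `α < ξ`. Infinitely many immediate successors
form an infinite antichain, which no finitely many branches can cover, so each of her moves is
legal. Bob's choices then extend each other, so they form a chain, contained in one branch `b`;
the complement of `b` is a neighbourhood of `p` missing all of them.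
-/

noncomputable section

namespace TSeq

/-- The `α`-th entry of `s`, with junk value `0` beyond the length of `s`. -/
def digit (s : TSeq) (α : Ordinal.{0}) : ℕ :=
  if h : α < s.1.1 then s.2 α h else 0

theorem le_of_digit_eq {s t : TSeq} (hlen : s.1.1 ≤ t.1.1)
    (h : ∀ α < s.1.1, s.digit α = t.digit α) : s.le t :=
  ⟨hlen, fun α hα => by simpa [digit, hα, hα.trans_le hlen] using h α hα⟩

theorem le.digit_eq {s t : TSeq} (hst : s.le t) {α : Ordinal.{0}} (hα : α < s.1.1) :
    s.digit α = t.digit α := by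
  obtain ⟨hlen, h⟩ := hst
  simp [digit, hα, hα.trans_le hlen, h]

theorem succ_lt_omega1 {ξ : Ordinal.{0}} (hξ : ξ < (Cardinal.aleph 1).ord) :
    Order.succ ξ < (Cardinal.aleph 1).ord :=
  (Cardinal.isSuccLimit_ord (Cardinal.aleph0_le_aleph 1)).succ_lt hξ

def snoc (ξ : Ordinal.{0}) (hξ : ξ < (Cardinal.aleph 1).ord) (d : ∀ α < ξ, ℕ) (n : ℕ) : TSeq :=
  ⟨⟨Order.succ ξ, succ_lt_omega1 hξ⟩, fun α _ => if h : α < ξ then d α h else n⟩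

section snoc

variable {ξ : Ordinal.{0}} {hξ : ξ < (Cardinal.aleph 1).ord} {d : ∀ α < ξ, ℕ}

theorem digit_snoc_of_lt {α : Ordinal.{0}} (hα : α < ξ) (n : ℕ) :
    (snoc ξ hξ d n).digit α = d α hα := by
  simp only [digit, snoc, dif_pos (hα.trans (Order.lt_succ ξ)), dif_pos hα]

theorem digit_snoc_self (n : ℕ) : (snoc ξ hξ d n).digit ξ = n := by
  simp [digit, snoc]

theorem snoc_injective : Function.Injective (snoc ξ hξ d) := fun n m h => by
  simpa only [digit_snoc_self] using congrArg (digit · ξ) h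

theorem isAntichain_range_snoc : IsAntichain TSeq.le (range (snoc ξ hξ d)) := by
  rintro _ ⟨n, rfl⟩ _ ⟨m, rfl⟩ hne hle
  exact hne (congrArg _ (by simpa only [digit_snoc_self] using hle.digit_eq (Order.lt_succ ξ)))

end snoc

end TSeq

theorem isClosed_image_some_of_isBranch {b : Set TSeq} (hb : IsBranch b) :
    IsClosed (some '' b) :=
  isOpen_compl_iff.mp fun _ => ⟨{b}, finite_singleton b, by simpa using hb, by simp⟩

theorem none_notMem_closure_of_isChain {c : Set TSeq} (hc : IsChain TSeq.le c)
    {A : Set (Option TSeq)} (hA : A ⊆ some '' c) : none ∉ closure A := by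
  obtain ⟨b, hb, hcb⟩ := hc.exists_maxChain
  have hbc : IsClosed (some '' b) := isClosed_image_some_of_isBranch ⟨hb.1, fun _ h => hb.2 h⟩
  exact fun h => by simpa using closure_minimal (hA.trans (image_mono hcb)) hbc h

theorem none_mem_closure_of_infinite_antichain {S : Set TSeq} (hinf : S.Infinite)
    (hS : IsAntichain TSeq.le S) : none ∈ closure (some '' S) := by
  refine mem_closure_iff.mpr fun U hU hnone => not_not.mp fun hdisj => hinf ?_
  obtain ⟨F, hF, hbr, hcov⟩ := hU hnone
  have hSF : S ⊆ ⋃₀ F := fun s hs => hcov fun hsU => hdisj ⟨_, hsU, s, hs, rfl⟩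
  refine (hF.biUnion fun b hb =>
    (inter_subsingleton_of_isAntichain_of_isChain hS (hbr b hb).1).finite).subset fun s hs => ?_
  obtain ⟨b, hb, hsb⟩ := hSF hs
  exact mem_iUnion₂.2 ⟨b, hb, hs, hsb⟩

/-- A legal `α`-th choice of Bob has length `α + 1`, so its `α`-th entry is its last one and the
node extended here is the concatenation of Bob's previous choices. -/
def aliceMove (ξ : Ordinal.{0}) (hξ : ξ < (Cardinal.aleph 1).ord)
    (hist : ∀ α < ξ, Option TSeq) : Set (Option TSeq) :=
  some '' range (TSeq.snoc ξ hξ fun α hα => (hist α hα).elim 0 (·.digit α))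

theorem none_mem_closure_aliceMove (ξ : Ordinal.{0}) (hξ : ξ < (Cardinal.aleph 1).ord)
    (hist : ∀ α < ξ, Option TSeq) : none ∈ closure (aliceMove ξ hξ hist) :=
  none_mem_closure_of_infinite_antichain (infinite_range_of_injective TSeq.snoc_injective)
    TSeq.isAntichain_range_snoc

theorem isChain_of_mem_range_snoc {t : ∀ ξ < (Cardinal.aleph 1).ord, TSeq}
    (ht : ∀ ξ hξ, t ξ hξ ∈ range (TSeq.snoc ξ hξ fun α hα => (t α (hα.trans hξ)).digit α)) :
    IsChain TSeq.le {s | ∃ ξ hξ, t ξ hξ = s} := by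
  have hle : ∀ ξ hξ ξ' hξ', ξ < ξ' → (t ξ hξ).le (t ξ' hξ') := by
    intro ξ hξ ξ' hξ' hlt
    obtain ⟨n, hn⟩ := ht ξ hξ
    obtain ⟨n', hn'⟩ := ht ξ' hξ'
    have hlen : (t ξ hξ).1.1 = Order.succ ξ := by rw [← hn]; rfl
    refine TSeq.le_of_digit_eq ?_ fun α hα => ?_
    · rw [hlen, ← hn']
      exact Order.succ_le_succ hlt.le
    · rw [hlen, Order.lt_succ_iff] at hα
      rw [← hn', TSeq.digit_snoc_of_lt (hα.trans_lt hlt)]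
      rcases hα.lt_or_eq with hα | rfl
      · rw [← hn, TSeq.digit_snoc_of_lt hα]
      · rfl
  rintro _ ⟨ξ, hξ, rfl⟩ _ ⟨ξ', hξ', rfl⟩ hne
  rcases lt_trichotomy ξ ξ' with h | rfl | h
  · exact .inl (hle ξ hξ ξ' hξ' h)
  · exact absurd rfl hne
  · exact .inr (hle ξ' hξ' ξ hξ h)

def aliceStrategy : AliceStratOne.{1, 0} (Option TSeq) none (Cardinal.aleph 1).ord :=
  ⟨aliceMove, none_mem_closure_aliceMove⟩

theorem aliceStrategy_winning : aliceStrategy.Winning := by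
  intro g hg
  choose t ht hgt using hg
  obtain rfl : g = fun ξ hξ => some (t ξ hξ) := funext₂ fun ξ hξ => (hgt ξ hξ).symm
  refine none_notMem_closure_of_isChain (isChain_of_mem_range_snoc ht) ?_
  rintro _ ⟨ξ, hξ, rfl⟩
  exact mem_image_of_mem _ ⟨ξ, hξ, rfl⟩

end

/-- On `X = {p} ∪ ω^{<ω₁}` with the branch topology, Alice has a winning strategy in the
long tightness game `G_1^{ω₁}(Ω_p, Ω_p)`. -/
theorem alice_winning_tree :
    ∃ S : AliceStratOne.{1, 0} (Option TSeq) none (Cardinal.aleph 1).ord, S.Winning :=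
  ⟨aliceStrategy, aliceStrategy_winning⟩
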